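/- arXiv:1210.6639 — 4 statements merged into one kernel-verified Lean document; each statement's English description precedes it below -/
import Mathlib

section
/- For all real t₁, t₂: g(t₁) < g(t₂) if and only if h(t₁) < h(t₂), and g(t₁) = g(t₂) if and only if h(t₁) = h(t₂), where g(t) = 2|t - ⌊t⌋ - 1/2| and h(t) = (cos(2πt) + 1)/2. -/
open Real

noncomputable def sawtooth (t : ℝ) : ℝ := 2 * |t - ⌊t⌋ - 1/2|

noncomputable def hTrig (t : ℝ) : ℝ := (Real.cos (2 * π * t) + 1) / 2

lemma sawtooth_mem (t : ℝ) : sawtooth t ∈ Set.Icc (0:ℝ) 1 := by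
  have h1 : (0:ℝ) ≤ Int.fract t := Int.fract_nonneg t
  have h2 : Int.fract t < 1 := Int.fract_lt_one t
  unfold sawtooth
  have : t - ⌊t⌋ = Int.fract t := rfl
  rw [this]
  constructor
  · positivity
  · have : |Int.fract t - 1/2| ≤ 1/2 := abs_le.mpr ⟨by linarith, by linarith⟩
    linarith

lemma cos_eq (t : ℝ) : Real.cos (2 * π * t) = -Real.cos (π * sawtooth t) := by
  have hfr : t = Int.fract t + (⌊t⌋ : ℝ) := by rw [Int.fract]; ring
  have : Real.cos (2 * π * t) = Real.cos (2 * π * Int.fract t) := by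
    conv_lhs => rw [hfr]
    rw [mul_add]
    rw [show 2 * π * (⌊t⌋:ℝ) = (⌊t⌋:ℝ) * (2 * π) by ring]
    exact Real.cos_add_int_mul_two_pi _ _
  rw [this]
  unfold sawtooth
  have hft : t - ⌊t⌋ = Int.fract t := rfl
  rw [hft]
  rcases le_or_gt (Int.fract t) (1/2) with h | h
  · rw [abs_of_nonpos (by linarith)]
    have : π * (2 * -(Int.fract t - 1/2)) = π - 2 * π * Int.fract t := by ring
    rw [this, Real.cos_pi_sub, neg_neg]
  · rw [abs_of_pos (by linarith)]
    have : π * (2 * (Int.fract t - 1/2)) = 2 * π * Int.fract t - π := by ring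
    rw [this, Real.cos_sub_pi, neg_neg]

lemma hTrig_eq (t : ℝ) : hTrig t = (1 - Real.cos (π * sawtooth t)) / 2 := by
  unfold hTrig; rw [cos_eq]; ring

lemma key_anti : StrictAntiOn (fun s : ℝ => Real.cos (π * s)) (Set.Icc 0 1) := by
  have h := Real.strictAntiOn_cos
  intro a ha b hb hab
  apply h
  · exact ⟨mul_nonneg Real.pi_pos.le ha.1, by nlinarith [Real.pi_pos, ha.2]⟩
  · exact ⟨mul_nonneg Real.pi_pos.le hb.1, by nlinarith [Real.pi_pos, hb.2]⟩
  · nlinarith [Real.pi_pos]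

theorem sawtooth_hTrig_order (t₁ t₂ : ℝ) :
    (sawtooth t₁ < sawtooth t₂ ↔ hTrig t₁ < hTrig t₂) ∧
    (sawtooth t₁ = sawtooth t₂ ↔ hTrig t₁ = hTrig t₂) := by
  have m1 := sawtooth_mem t₁
  have m2 := sawtooth_mem t₂
  have e1 := hTrig_eq t₁
  have e2 := hTrig_eq t₂
  constructor
  · constructor
    · intro h
      rw [e1, e2]
      have := key_anti m1 m2 h
      simp only at this
      linarith
    · intro h
      rw [e1, e2] at h
      by_contra hc
      push_neg at hc
      rcases lt_or_eq_of_le hc with h' | h'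
      · have := key_anti m2 m1 h'
        simp only at this
        linarith
      · rw [h'] at h; linarith
  · constructor
    · intro h; rw [e1, e2, h]
    · intro h
      rw [e1, e2] at h
      by_contra hc
      rcases lt_or_gt_of_ne hc with h' | h'
      · have := key_anti m1 m2 h'; simp only at this; linarith
      · have := key_anti m2 m1 h'; simp only at this; linarith
end

section
/- Let s, n be positive integers with n ≥ 2s + 1 and let l be an integer with 1 ≤ l ≤ s - 1. Then the function x_l(β) = tan(lβ/(2n)) / tan(sβ/(2n)) is strictly decreasing in β on the interval (0, 2π]. -/
/-!
Writing `y = b x`, the logarithmic derivative of `tan y` is `2 / sin (2 y)`, so the derivative of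
`tan (a x) / tan (b x)` has the sign of `a sin (2 b x) - b sin (2 a x)`. For `0 < a < b` and
`2 b x ≤ π` this is negative because `sin t / t` is strictly decreasing on `(0, π]`, which in turn
is the strict concavity of `sin` there (its secants through the origin get flatter).
In the theorem `a = l / (2n)`, `b = s / (2n)`, and `n > 2s` puts `(0, 2π]` inside `(0, π / (2b))`.
-/

open Real Set

namespace Real

lemma sin_div_self_strictAntiOn : StrictAntiOn (fun x : ℝ => sin x / x) (Ioc 0 π) := by
  intro x hx y hy hxy
  simpa using strictConcaveOn_sin_Icc.secant_strict_mono (a := 0) ⟨le_rfl, pi_pos.le⟩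
    (Ioc_subset_Icc_self hx) (Ioc_subset_Icc_self hy) hx.1.ne' hy.1.ne' hxy

lemma mul_sin_mul_lt_mul_sin_mul {a b x : ℝ} (ha : 0 < a) (hab : a < b) (hx : 0 < x)
    (hbx : b * x ≤ π) : a * sin (b * x) < b * sin (a * x) := by
  have hax : 0 < a * x := mul_pos ha hx
  have hlt : a * x < b * x := mul_lt_mul_of_pos_right hab hx
  have h := sin_div_self_strictAntiOn ⟨hax, hlt.le.trans hbx⟩ ⟨hax.trans hlt, hbx⟩ hlt
  rw [div_lt_div_iff₀ (hax.trans hlt) hax] at h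
  exact lt_of_mul_lt_mul_right (by linarith) hx.le

lemma hasDerivAt_tan_const_mul {a x : ℝ} (h : cos (a * x) ≠ 0) :
    HasDerivAt (fun x => tan (a * x)) (a / cos (a * x) ^ 2) x := by
  have h := (hasDerivAt_tan h).comp x ((hasDerivAt_id x).const_mul a)
  rw [mul_one, one_div_mul_eq_div] at h
  exact h

lemma tan_mul_cos_sq (y : ℝ) : tan y * cos y ^ 2 = sin (2 * y) / 2 := by
  rw [tan_eq_sin_div_cos, sin_two_mul]
  rcases eq_or_ne (cos y) 0 with h | h
  · simp [h]
  · field_simp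

lemma tan_mul_div_tan_mul_deriv_neg {a b x : ℝ} (ha : 0 < a) (hab : a < b) (hx : 0 < x)
    (hbx : b * x < π / 2) :
    a / cos (a * x) ^ 2 * tan (b * x) - tan (a * x) * (b / cos (b * x) ^ 2) < 0 := by
  have hax : a * x < b * x := mul_lt_mul_of_pos_right hab hx
  have hca : 0 < cos (a * x) :=
    cos_pos_of_mem_Ioo ⟨by nlinarith [pi_pos], hax.trans hbx⟩
  have hcb : 0 < cos (b * x) := cos_pos_of_mem_Ioo ⟨by nlinarith [pi_pos], hbx⟩
  have hsin : a * sin (b * (2 * x)) < b * sin (a * (2 * x)) :=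
    mul_sin_mul_lt_mul_sin_mul ha hab (by positivity) (by linarith)
  calc a / cos (a * x) ^ 2 * tan (b * x) - tan (a * x) * (b / cos (b * x) ^ 2)
      = (a * (tan (b * x) * cos (b * x) ^ 2) - b * (tan (a * x) * cos (a * x) ^ 2)) /
          (cos (a * x) ^ 2 * cos (b * x) ^ 2) := by
        generalize cos (a * x) = ca at hca
        generalize cos (b * x) = cb at hcb
        field_simp
    _ = (a * sin (b * (2 * x)) - b * sin (a * (2 * x))) /
          (2 * cos (a * x) ^ 2 * cos (b * x) ^ 2) := by
        simp only [tan_mul_cos_sq, mul_left_comm _ 2 x]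
        ring
    _ < 0 := div_neg_of_neg_of_pos (by linarith) (by positivity)

lemma tan_mul_div_tan_mul_strictAntiOn {a b : ℝ} (ha : 0 < a) (hab : a < b) :
    StrictAntiOn (fun x => tan (a * x) / tan (b * x)) (Ioo 0 (π / (2 * b))) := by
  have hb : 0 < b := ha.trans hab
  have hmem : ∀ x ∈ Ioo 0 (π / (2 * b)), 0 < x ∧ b * x < π / 2 := fun x hx =>
    ⟨hx.1, by linarith [(lt_div_iff₀ (by positivity)).1 hx.2]⟩
  have hderiv : ∀ x ∈ Ioo 0 (π / (2 * b)), HasDerivAt (fun x => tan (a * x) / tan (b * x))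
      ((a / cos (a * x) ^ 2 * tan (b * x) - tan (a * x) * (b / cos (b * x) ^ 2)) /
        tan (b * x) ^ 2) x := by
    intro x hx
    obtain ⟨hx, hbx⟩ := hmem x hx
    have hax : a * x < b * x := mul_lt_mul_of_pos_right hab hx
    refine (hasDerivAt_tan_const_mul ?_).div (hasDerivAt_tan_const_mul ?_) ?_
    · exact (cos_pos_of_mem_Ioo ⟨by nlinarith [pi_pos], hax.trans hbx⟩).ne'
    · exact (cos_pos_of_mem_Ioo ⟨by nlinarith [pi_pos], hbx⟩).ne'
    · exact (tan_pos_of_pos_of_lt_pi_div_two (by positivity) hbx).ne'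
  refine strictAntiOn_of_deriv_neg (convex_Ioo _ _)
    (fun x hx => (hderiv x hx).continuousAt.continuousWithinAt) fun x hx => ?_
  rw [interior_Ioo] at hx
  obtain ⟨hx₀, hbx⟩ := hmem x hx
  rw [(hderiv x hx).deriv]
  exact div_neg_of_neg_of_pos (tan_mul_div_tan_mul_deriv_neg ha hab hx₀ hbx)
    (pow_pos (tan_pos_of_pos_of_lt_pi_div_two (by positivity) hbx) 2)

end Real

theorem xl_strictAnti_general (s n l : ℕ) (hn : n ≥ 2 * s + 1)
    (hl : 1 ≤ l) (hls : l ≤ s - 1) :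
    StrictAntiOn
      (fun β : ℝ => Real.tan (l * β / (2 * n)) / Real.tan (s * β / (2 * n)))
      (Set.Ioc 0 (2 * π)) := by
  have hl₀ : (0 : ℝ) < l := by exact_mod_cast hl
  have hlt : (l : ℝ) < s := by exact_mod_cast (by omega : l < s)
  have hsn : 2 * (s : ℝ) < n := by exact_mod_cast (by omega : 2 * s < n)
  have hn₀ : (0 : ℝ) < 2 * n := by linarith
  have hb : 4 * (s / (2 * n)) < (1 : ℝ) := by
    rw [mul_div_assoc', div_lt_one hn₀]
    linarith
  have hdom : Ioc 0 (2 * π) ⊆ Ioo 0 (π / (2 * (s / (2 * n)))) := by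
    refine fun β hβ => ⟨hβ.1, hβ.2.trans_lt ?_⟩
    rw [lt_div_iff₀ (mul_pos two_pos (div_pos (hl₀.trans hlt) hn₀))]
    nlinarith [pi_pos]
  simpa only [mul_div_right_comm] using
    (tan_mul_div_tan_mul_strictAntiOn (div_pos hl₀ hn₀)
      (div_lt_div_of_pos_right hlt hn₀)).mono hdom

theorem xl_strictAnti (s n l : ℕ) (hs : 0 < s) (hn : n ≥ 2 * s + 1)
    (hl : 1 ≤ l) (hls : l ≤ s - 1) :
    StrictAntiOn
      (fun β : ℝ => Real.tan (l * β / (2 * n)) / Real.tan (s * β / (2 * n)))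
      (Set.Ioc 0 (2 * π)) :=
  xl_strictAnti_general s n l hn hl hls
end

section
/- With g(t) = 2|t - ⌊t⌋ - 1/2|, for all real t₁, t₂, φ and every positive integer m: the sign of g(m·t₁ + φ) - g(m·t₂ + φ) equals the sign of -sin(π(m(t₁ + t₂) + 2φ)) · sin(π m (t₁ - t₂)). -/
open Real

/-!
Writing `u = fract t - 1/2`, one has `-cos (2πt) = cos (2πu) = cos (2π|u|)` with `2π|u| ∈ [0, π]`,
so `sawtooth t = arccos (-cos (2πt)) / π` is a strictly increasing function of `cos (2πt)`.
Hence `sawtooth a - sawtooth b` has the sign of `cos (2πa) - cos (2πb)`, which the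
sum-to-product formula factors as `-2 sin (π(a + b)) sin (π(a - b))`.
-/

namespace Real

theorem sign_sub_eq_of_strictMonoOn {f : ℝ → ℝ} {s : Set ℝ} (hf : StrictMonoOn f s) {x y : ℝ}
    (hx : x ∈ s) (hy : y ∈ s) : sign (f x - f y) = sign (x - y) := by
  rcases lt_trichotomy x y with h | rfl | h
  · rw [sign_of_neg (sub_neg.2 (hf hx hy h)), sign_of_neg (sub_neg.2 h)]
  · simp
  · rw [sign_of_pos (sub_pos.2 (hf hy hx h)), sign_of_pos (sub_pos.2 h)]

theorem sign_mul_of_pos {c : ℝ} (hc : 0 < c) (r : ℝ) : sign (c * r) = sign r := by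
  rcases lt_trichotomy r 0 with h | rfl | h
  · rw [sign_of_neg (mul_neg_of_pos_of_neg hc h), sign_of_neg h]
  · simp
  · rw [sign_of_pos (mul_pos hc h), sign_of_pos h]

theorem strictMonoOn_arccos_neg_div_pi :
    StrictMonoOn (fun c => arccos (-c) / π) (Set.Icc (-1) 1) := by
  intro x hx y hy hxy
  have hx' : -x ∈ Set.Icc (-1 : ℝ) 1 := ⟨by linarith [hx.2], by linarith [hx.1]⟩
  have hy' : -y ∈ Set.Icc (-1 : ℝ) 1 := ⟨by linarith [hy.2], by linarith [hy.1]⟩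
  exact div_lt_div_of_pos_right (strictAntiOn_arccos hy' hx' (neg_lt_neg hxy)) pi_pos

end Real

theorem neg_cos_two_pi_mul_eq (t : ℝ) :
    -cos (2 * π * t) = cos (2 * π * |t - ⌊t⌋ - 1 / 2|) := by
  rw [← abs_of_pos two_pi_pos, ← abs_mul, cos_abs, abs_of_pos two_pi_pos,
    show 2 * π * (t - ⌊t⌋ - 1 / 2) = 2 * π * t - π - (⌊t⌋ : ℤ) * (2 * π) by ring,
    cos_sub_int_mul_two_pi, cos_sub_pi]

theorem sawtooth_eq_arccos_neg_cos (t : ℝ) : sawtooth t = arccos (-cos (2 * π * t)) / π := by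
  have hu_le : |t - ⌊t⌋ - 1 / 2| ≤ 1 / 2 := by
    rw [abs_le]
    constructor <;> linarith [Int.floor_le t, Int.lt_floor_add_one t]
  rw [neg_cos_two_pi_mul_eq, arccos_cos (by positivity) (by nlinarith [pi_pos]), sawtooth]
  field_simp

theorem sign_diff_eq_general (m : ℕ) (t₁ t₂ φ : ℝ) :
    Real.sign (sawtooth (m * t₁ + φ) - sawtooth (m * t₂ + φ)) =
      Real.sign (-(Real.sin (π * (m * (t₁ + t₂) + 2 * φ)) *
        Real.sin (π * m * (t₁ - t₂)))) := by
  have hcos_mem (t : ℝ) : cos (2 * π * t) ∈ Set.Icc (-1 : ℝ) 1 := ⟨neg_one_le_cos _, cos_le_one _⟩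
  have hfactor : cos (2 * π * (m * t₁ + φ)) - cos (2 * π * (m * t₂ + φ)) =
      2 * -(sin (π * (m * (t₁ + t₂) + 2 * φ)) * sin (π * m * (t₁ - t₂))) := by
    rw [cos_sub_cos]
    ring_nf
  rw [sawtooth_eq_arccos_neg_cos, sawtooth_eq_arccos_neg_cos,
    sign_sub_eq_of_strictMonoOn strictMonoOn_arccos_neg_div_pi (hcos_mem _) (hcos_mem _),
    hfactor, sign_mul_of_pos two_pos]

theorem sign_diff_eq (m : ℕ) (hm : 0 < m) (t₁ t₂ φ : ℝ) :
    Real.sign (sawtooth (m * t₁ + φ) - sawtooth (m * t₂ + φ)) =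
      Real.sign (-(Real.sin (π * (m * (t₁ + t₂) + 2 * φ)) *
        Real.sin (π * m * (t₁ - t₂)))) :=
  sign_diff_eq_general m t₁ t₂ φ
end

section
/- Let m be a positive integer and suppose t_i(β) + t'_i(β) = c is a constant (a multiple of 1/(2n)). Then the quantity sign(sin(π(m c + 2φ))) is independent of β; consequently, if φ is chosen with sin(π(m c + 2φ)) ≠ 0, then for all β ∈ (0, 2π], sign(Δ^φ_i(β)/Δ^φ_i(2π)) = sign(sin(π m (t_i(β) - t'_i(β))) / sin(π m (t_i(2π) - t'_i(2π)))), which is independent of the phase φ. -/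
/-!
Since `cos (π · g x) = -cos (2πx)` for the sawtooth `g` and `g` takes values in `[0, 1]`, where
`cos (π ·)` is decreasing, `g x - g y` has the sign of
`cos 2πx - cos 2πy = -2 sin π(x+y) · sin π(x-y)`. Along the crossing parameters `x + y = m c + 2φ`
is fixed, so the first factor contributes a constant nonzero sign, which cancels in the quotient.
-/

open Real

namespace Real

theorem sign_eq_coe_sign (r : ℝ) : Real.sign r = (SignType.sign r : ℝ) := by
  rcases lt_trichotomy r 0 with hr | rfl | hr
  · simp [sign_of_neg hr, hr]
  · simp
  · simp [sign_of_pos hr, hr]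

theorem sign_mul (a b : ℝ) : Real.sign (a * b) = Real.sign a * Real.sign b := by
  simp only [sign_eq_coe_sign, _root_.sign_mul, SignType.coe_mul]

theorem sign_div (a b : ℝ) : Real.sign (a / b) = Real.sign a * Real.sign b := by
  rw [div_eq_mul_inv, sign_mul, sign_inv]

theorem sign_mul_self_of_ne_zero {r : ℝ} (hr : r ≠ 0) : Real.sign r * Real.sign r = 1 := by
  rcases sign_apply_eq_of_ne_zero r hr with h | h <;> rw [h] <;> norm_num

theorem sign_sub_eq_sign_cos_sub {a b : ℝ} (ha : a ∈ Set.Icc 0 π) (hb : b ∈ Set.Icc 0 π) :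
    Real.sign (a - b) = Real.sign (cos b - cos a) := by
  rcases lt_trichotomy a b with h | rfl | h
  · have := strictAntiOn_cos ha hb h
    rw [sign_of_neg (by linarith), sign_of_neg (by linarith)]
  · simp
  · have := strictAntiOn_cos hb ha h
    rw [sign_of_pos (by linarith), sign_of_pos (by linarith)]

end Real

theorem sawtooth_eq_abs_fract (x : ℝ) : sawtooth x = 2 * |Int.fract x - 1/2| := by
  rw [sawtooth, Int.self_sub_floor]

theorem sawtooth_mem_Icc (x : ℝ) : sawtooth x ∈ Set.Icc 0 1 := by
  have h0 := Int.fract_nonneg x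
  have h1 := Int.fract_lt_one x
  have : |Int.fract x - 1/2| ≤ 1/2 := abs_le.2 ⟨by linarith, by linarith⟩
  rw [sawtooth_eq_abs_fract]
  constructor <;> [positivity; linarith]

theorem cos_pi_mul_sawtooth (x : ℝ) : cos (π * sawtooth x) = -cos (2 * π * x) := by
  have hx : 2 * π * x = 2 * π * (Int.fract x - 1/2) + π + ⌊x⌋ * (2 * π) := by
    rw [Int.fract]; ring
  have habs : π * sawtooth x = |2 * π * (Int.fract x - 1/2)| := by
    rw [sawtooth_eq_abs_fract, abs_mul, abs_of_pos two_pi_pos]; ring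
  rw [hx, cos_add_int_mul_two_pi, cos_add_pi, neg_neg, habs, cos_abs]

theorem sign_sawtooth_sub_sawtooth (x y : ℝ) :
    Real.sign (sawtooth x - sawtooth y) =
      -(Real.sign (sin (π * (x + y))) * Real.sign (sin (π * (x - y)))) := by
  have hmem : ∀ z, π * sawtooth z ∈ Set.Icc 0 π := fun z => by
    obtain ⟨h0, h1⟩ := sawtooth_mem_Icc z
    exact ⟨by positivity, by nlinarith [pi_pos]⟩
  calc Real.sign (sawtooth x - sawtooth y)
      = Real.sign (π * sawtooth x - π * sawtooth y) := by
        rw [← mul_sub, Real.sign_mul, sign_of_pos pi_pos, one_mul]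
    _ = Real.sign (cos (2 * π * x) - cos (2 * π * y)) := by
        rw [Real.sign_sub_eq_sign_cos_sub (hmem x) (hmem y), cos_pi_mul_sawtooth,
          cos_pi_mul_sawtooth, neg_sub_neg]
    _ = Real.sign (-2 * sin (π * (x + y)) * sin (π * (x - y))) := by
        rw [cos_sub_cos]; ring_nf
    _ = _ := by
        rw [Real.sign_mul, Real.sign_mul, sign_of_neg (by norm_num : (-2:ℝ) < 0)]; ring

theorem sign_quotient_indep_general (m : ℕ)
    (t t' : ℝ → ℝ) (c : ℝ)
    (hsum : ∀ β, t β + t' β = c) (φ : ℝ)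
    (hφ : Real.sin (π * (m * c + 2 * φ)) ≠ 0)
    (Δ : ℝ → ℝ)
    (hΔ : ∀ β, Δ β = sawtooth (m * t β + φ) - sawtooth (m * t' β + φ)) :
    ∀ β ∈ Set.Ioc (0:ℝ) (2 * π),
      Real.sign (Δ β / Δ (2 * π)) =
        Real.sign (Real.sin (π * m * (t β - t' β)) /
          Real.sin (π * m * (t (2 * π) - t' (2 * π)))) := by
  have hsign : ∀ γ, Real.sign (Δ γ) =
      -(Real.sign (sin (π * (m * c + 2 * φ))) * Real.sign (sin (π * m * (t γ - t' γ)))) := by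
    intro γ
    rw [hΔ, sign_sawtooth_sub_sawtooth, ← hsum γ]
    congr 4 <;> ring
  intro β _
  rw [Real.sign_div, Real.sign_div, hsign, hsign]
  linear_combination Real.sign (sin (π * m * (t β - t' β))) *
    Real.sign (sin (π * m * (t (2 * π) - t' (2 * π)))) * Real.sign_mul_self_of_ne_zero hφ

theorem sign_quotient_indep (m n : ℕ) (hm : 0 < m) (hn : 0 < n)
    (t t' : ℝ → ℝ) (c : ℝ) (hc : ∃ j : ℤ, c = j * (1 / (2 * n)))
    (hsum : ∀ β, t β + t' β = c) (φ : ℝ)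
    (hφ : Real.sin (π * (m * c + 2 * φ)) ≠ 0)
    (Δ : ℝ → ℝ)
    (hΔ : ∀ β, Δ β = sawtooth (m * t β + φ) - sawtooth (m * t' β + φ)) :
    ∀ β ∈ Set.Ioc (0:ℝ) (2 * π),
      Real.sign (Δ β / Δ (2 * π)) =
        Real.sign (Real.sin (π * m * (t β - t' β)) /
          Real.sin (π * m * (t (2 * π) - t' (2 * π)))) :=
  sign_quotient_indep_general m t t' c hsum φ hφ Δ hΔ
end
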